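/- In the metric space M₂, for every m ∈ ℕ, setting A_m = {u_m, v_m}, one has d(x,y) + d(u_m,v_m) ≤ d(x,u_m) + d(y,v_m) for all x, y ∈ M₂ ∖ A_m. Consequently, M₂ has the sequential long trapezoid property (seq-LTP). -/

import Mathlib

/-- Build a metric space from a distance function which vanishes on the diagonal and takes
values in `[1,2]` off the diagonal (the triangle inequality is then automatic). -/
noncomputable def MetricSpace.ofOneTwo {α : Type*} (D : α → α → ℝ)
    (hself : ∀ x, D x x = 0) (hsymm : ∀ x y, D x y = D y x)
    (hlow : ∀ x y, x ≠ y → 1 ≤ D x y) (hhigh : ∀ x y, D x y ≤ 2) : MetricSpace α :=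
  { dist := D
    dist_self := hself
    dist_comm := hsymm
    dist_triangle := by
      intro x y z
      show D x z ≤ D x y + D y z
      rcases eq_or_ne x y with rfl | hxy
      · simp [hself]
      rcases eq_or_ne y z with rfl | hyz
      · simp [hself]
      have h1 := hlow x y hxy
      have h2 := hlow y z hyz
      have h3 := hhigh x z
      linarith
    eq_of_dist_eq_zero := by
      intro x y hxy
      replace hxy : D x y = 0 := hxy
      by_contra h
      have := hlow x y h
      linarith }

/-- The points of the metric space `M₂`: `a 0, a 1, b 0, b 1` and `u m, v m` for `m : ℕ`. -/
inductive M2 where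
  | a : Fin 2 → M2
  | b : Fin 2 → M2
  | u : ℕ → M2
  | v : ℕ → M2
deriving DecidableEq

namespace M2

/-- One-sided description of the pairs of points of `M₂` at distance `1`:
`d(aᵢ, bⱼ) = d(aᵢ, uₘ) = d(bᵢ, vₘ) = d(uₘ, vₘ) = 1`. -/
def one : M2 → M2 → Prop
  | .a _, .b _ => True
  | .a _, .u _ => True
  | .b _, .v _ => True
  | .u m, .v l => m = l
  | _, _ => False

/-- The distance on `M₂`: `0` on the diagonal, `1` on the pairs described by `M2.one`
(in either order), and `2` otherwise. -/
noncomputable def D (p q : M2) : ℝ :=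
  open scoped Classical in
  if p = q then 0 else if one p q ∨ one q p then 1 else 2

noncomputable instance : MetricSpace M2 :=
  MetricSpace.ofOneTwo D
    (fun x => by simp [D])
    (fun x y => by
      rcases eq_or_ne x y with rfl | h
      · rfl
      · rw [D, D, if_neg h, if_neg (Ne.symm h)]
        rcases em (one x y ∨ one y x) with h2 | h2
        · rw [if_pos h2, if_pos h2.symm]
        · rw [if_neg h2, if_neg fun hc => h2 hc.symm])
    (fun x y h => by rw [D, if_neg h]; split_ifs <;> norm_num)
    (fun x y => by rw [D]; split_ifs <;> norm_num)

end M2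

/-- A metric space `M` has the *sequential long trapezoid property* (seq-LTP). -/
def SeqLTP (M : Type*) [MetricSpace M] : Prop :=
  ∀ ε : ℝ, 0 < ε → ∃ A : ℕ → Set M,
    (Pairwise fun m k => Disjoint (A m) (A k)) ∧
    ∀ m : ℕ, ∃ u ∈ A m, ∃ v ∈ A m, u ≠ v ∧
      ∀ x ∉ A m, ∀ y ∉ A m,
        (1 - ε) * (dist x y + dist u v) ≤ dist x u + dist y v

/-! All distances between distinct points lie in `{1, 2}`. Off `{uₘ, vₘ}` both
`d(x, uₘ)` and `d(y, vₘ)` are at least `1` while `d(uₘ, vₘ) = 1` and `d(x, y) ≤ 2`, so the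
only possible failure is `d(x, uₘ) = d(y, vₘ) = 1` with `d(x, y) = 2`. But the neighbours of
`uₘ` other than `vₘ` are the `aᵢ`, those of `vₘ` other than `uₘ` are the `bⱼ`, and
`d(aᵢ, bⱼ) = 1`. An ε-free inequality gives the seq-LTP for every `ε`. -/

theorem SeqLTP.of_forall_dist_add_dist_le {M : Type*} [MetricSpace M] (A : ℕ → Set M)
    (hA : Pairwise fun m k => Disjoint (A m) (A k)) (u v : ℕ → M) (hu : ∀ m, u m ∈ A m)
    (hv : ∀ m, v m ∈ A m) (huv : ∀ m, u m ≠ v m)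
    (h : ∀ m, ∀ x ∉ A m, ∀ y ∉ A m, dist x y + dist (u m) (v m) ≤ dist x (u m) + dist y (v m)) :
    SeqLTP M := by
  refine fun ε hε => ⟨A, hA, fun m => ⟨u m, hu m, v m, hv m, huv m, fun x hx y hy => ?_⟩⟩
  calc (1 - ε) * (dist x y + dist (u m) (v m)) ≤ dist x y + dist (u m) (v m) :=
        mul_le_of_le_one_left (by positivity) (by linarith)
    _ ≤ dist x (u m) + dist y (v m) := h m x hx y hy

namespace M2

theorem not_one_self (p : M2) : ¬one p p := by
  cases p <;> simp [one]

theorem dist_eq_one_iff (p q : M2) : dist p q = 1 ↔ one p q ∨ one q p := by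
  change D p q = 1 ↔ _
  unfold D
  split_ifs with hpq h
  · subst hpq
    simp [not_one_self]
  · simp [h]
  · simp [h]

theorem dist_eq_one_or_two {p q : M2} (h : p ≠ q) : dist p q = 1 ∨ dist p q = 2 := by
  change D p q = 1 ∨ D p q = 2
  rw [D, if_neg h]
  split_ifs <;> norm_num

theorem dist_le_two (p q : M2) : dist p q ≤ 2 := by
  rcases eq_or_ne p q with rfl | h
  · simp
  · rcases dist_eq_one_or_two h with h | h <;> linarith

theorem dist_a_b (i j : Fin 2) : dist (a i) (b j) = 1 :=
  (dist_eq_one_iff _ _).2 (Or.inl trivial)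

theorem dist_u_v (m : ℕ) : dist (u m) (v m) = 1 :=
  (dist_eq_one_iff _ _).2 (Or.inl rfl)

theorem exists_eq_a_of_dist_u_eq_one {x : M2} {m : ℕ} (hx : x ≠ v m)
    (h : dist x (u m) = 1) : ∃ i, x = a i := by
  rw [dist_eq_one_iff] at h
  rcases x with i | i | k | k <;> simp_all [one]

theorem exists_eq_b_of_dist_v_eq_one {y : M2} {m : ℕ} (hy : y ≠ u m)
    (h : dist y (v m) = 1) : ∃ j, y = b j := by
  rw [dist_eq_one_iff] at h
  rcases y with j | j | k | k <;> simp_all [one]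

theorem dist_add_dist_u_v_le {m : ℕ} {x y : M2} (hx : x ∉ ({u m, v m} : Set M2))
    (hy : y ∉ ({u m, v m} : Set M2)) :
    dist x y + dist (u m) (v m) ≤ dist x (u m) + dist y (v m) := by
  simp only [Set.mem_insert_iff, Set.mem_singleton_iff, not_or] at hx hy
  obtain ⟨hxu, hxv⟩ := hx
  obtain ⟨hyu, hyv⟩ := hy
  have hxy := dist_le_two x y
  rw [dist_u_v]
  rcases dist_eq_one_or_two hxu with hdx | hdx <;> rcases dist_eq_one_or_two hyv with hdy | hdy
  · obtain ⟨i, rfl⟩ := exists_eq_a_of_dist_u_eq_one hxv hdx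
    obtain ⟨j, rfl⟩ := exists_eq_b_of_dist_v_eq_one hyu hdy
    rw [dist_a_b]
    linarith
  all_goals linarith

theorem pairwise_disjoint_pair_u_v :
    Pairwise fun m k => Disjoint ({u m, v m} : Set M2) {u k, v k} := by
  intro m k hmk
  simp [Set.disjoint_insert_right, hmk.symm]

end M2

/-- In `M₂`, for every `m`, taking `Aₘ = {uₘ, vₘ}` one has the (ε-free) long trapezoid
inequality for all points outside `Aₘ`; consequently `M₂` has the seq-LTP. -/
theorem M2_seqLTP :
    (∀ m : ℕ, ∀ x ∉ ({M2.u m, M2.v m} : Set M2), ∀ y ∉ ({M2.u m, M2.v m} : Set M2),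
      dist x y + dist (M2.u m) (M2.v m) ≤ dist x (M2.u m) + dist y (M2.v m)) ∧
    SeqLTP M2 :=
  ⟨fun _ _ hx _ hy => M2.dist_add_dist_u_v_le hx hy,
    SeqLTP.of_forall_dist_add_dist_le _ M2.pairwise_disjoint_pair_u_v M2.u M2.v (by simp)
      (by simp) (by simp) fun _ _ hx _ hy => M2.dist_add_dist_u_v_le hx hy⟩
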